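/- arXiv:2112.13321 — 2 statements merged into one kernel-verified Lean document; each statement's English description precedes it below -/
import Mathlib

section
/- Let P be an lpm polynomial, i.e., P(X) = Σ_{J⊆[n]} c_J det(X_J) on symmetric n×n matrices, and let Π be a partition of [n]. If A is block diagonal with respect to Π, then the gradient ∇P(A) (as a symmetric matrix) is also block diagonal with respect to Π. -/
open MvPolynomial

/-- The generic symmetric matrix of indeterminates: entry `(i,j)` is the
variable indexed by the unordered pair `{i,j}`, so `X_{ij} = X_{ji}`. -/
noncomputable def genericSymMatrix (n : ℕ) :
    Matrix (Fin n) (Fin n) (MvPolynomial (Sym2 (Fin n)) ℝ) :=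
  Matrix.of fun i j => X (Sym2.mk i j)

/-- The principal minor (as a polynomial) indexed by a subset `J`. -/
noncomputable def genericPrincipalMinor (n : ℕ) (J : Finset (Fin n)) :
    MvPolynomial (Sym2 (Fin n)) ℝ :=
  ((genericSymMatrix n).submatrix (fun i : J => (i : Fin n))
    (fun i : J => (i : Fin n))).det

/-- The generic lpm polynomial `P(X) = Σ_{J⊆[n]} c_J det(X_J)`. -/
noncomputable def genericLpm (n : ℕ) (c : Finset (Fin n) → ℝ) :
    MvPolynomial (Sym2 (Fin n)) ℝ :=
  ∑ J : Finset (Fin n), C (c J) * genericPrincipalMinor n J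

/-! Conjugating by a diagonal sign matrix `D` fixes every principal minor, since
`det ((D X D)_J) = (∏_{k ∈ J} d_k)² det X_J`. Take `d_k = 1` on the block of `i` and `-1`
elsewhere. The substitution `X_{kl} ↦ d_k d_l X_{kl}` fixes `P` and the block diagonal `A`,
but multiplies `∂/∂X_{ij}` by `d_i d_j = -1` when `i` and `j` lie in different blocks, so
`(∂P/∂X_{ij})(A) = -(∂P/∂X_{ij})(A)`. -/

namespace MvPolynomial

variable {σ R : Type*} [CommRing R]

noncomputable def rescaleVars (w : σ → R) : MvPolynomial σ R →ₐ[R] MvPolynomial σ R :=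
  bind₁ fun u => C (w u) * X u

@[simp] lemma rescaleVars_X (w : σ → R) (u : σ) : rescaleVars w (X u) = C (w u) * X u :=
  bind₁_X_right _ _

lemma eval_rescaleVars (w A : σ → R) (p : MvPolynomial σ R) :
    eval A (rescaleVars w p) = eval (w * A) p := by
  induction p using MvPolynomial.induction_on with
  | C a => simp [rescaleVars]
  | add p q hp hq => simp only [map_add, hp, hq]
  | mul_X p u hp => simp [hp]

lemma pderiv_rescaleVars [DecidableEq σ] (w : σ → R) (s : σ) (p : MvPolynomial σ R) :
    pderiv s (rescaleVars w p) = C (w s) * rescaleVars w (pderiv s p) := by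
  induction p using MvPolynomial.induction_on with
  | C a => simp [rescaleVars]
  | add p q hp hq => simp only [map_add, hp, hq, mul_add]
  | mul_X p u hp =>
    simp only [map_mul, rescaleVars_X, Derivation.leibniz, derivation_C, pderiv_X, hp,
      smul_eq_mul, mul_zero, add_zero, map_add]
    rcases eq_or_ne u s with rfl | h
    · simp only [Pi.single_eq_same, map_one]
      ring
    · simp only [Pi.single_eq_of_ne h, mul_zero, map_zero, zero_add]
      ring

theorem eval_pderiv_eq_zero_of_rescaleVars_eq_self [IsAddTorsionFree R] {w A : σ → R} {s : σ}
    {p : MvPolynomial σ R} (hp : rescaleVars w p = p) (hA : w * A = A) (hs : w s = -1) :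
    eval A (pderiv s p) = 0 := by
  classical
  have h := congrArg (eval A) (pderiv_rescaleVars w s p)
  rw [hp, map_mul, eval_C, hs, eval_rescaleVars, hA, neg_one_mul] at h
  exact self_eq_neg.mp h

end MvPolynomial

namespace Sym2

variable {α R : Type*} [CommMonoid R]

def mulPair (d : α → R) : Sym2 α → R :=
  lift ⟨fun k l => d k * d l, fun _ _ => mul_comm _ _⟩

@[simp] lemma mulPair_mk (d : α → R) (k l : α) : mulPair d s(k, l) = d k * d l := rfl

end Sym2

lemma rescaleVars_genericPrincipalMinor {n : ℕ} (d : Fin n → ℝ) (J : Finset (Fin n)) :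
    rescaleVars (Sym2.mulPair d) (genericPrincipalMinor n J)
      = C ((∏ k ∈ J, d k) ^ 2) * genericPrincipalMinor n J := by
  set D := Matrix.diagonal fun a : J => (C (d a) : MvPolynomial (Sym2 (Fin n)) ℝ)
  set M := (genericSymMatrix n).submatrix (fun i : J => (i : Fin n)) (fun i : J => (i : Fin n))
  have hmap : M.map (rescaleVars (Sym2.mulPair d)) = D * M * D := by
    ext a b : 1
    simp only [M, D, genericSymMatrix, Matrix.map_apply, Matrix.submatrix_apply, Matrix.of_apply,
      rescaleVars_X, Sym2.mulPair_mk, C_mul, Matrix.mul_apply, Matrix.diagonal_apply, ite_mul,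
      mul_ite, zero_mul, mul_zero, Finset.sum_ite_eq, Finset.sum_ite_eq', Finset.mem_univ,
      if_true]
    ring
  have hdetD : D.det = C (∏ k ∈ J, d k) := by
    simp [D, Matrix.det_diagonal, Finset.prod_attach J fun k => C (d k)]
  rw [genericPrincipalMinor, AlgHom.map_det, AlgHom.mapMatrix_apply, hmap, Matrix.det_mul,
    Matrix.det_mul, hdetD, map_pow]
  ring

lemma rescaleVars_genericLpm {n : ℕ} (c : Finset (Fin n) → ℝ) {d : Fin n → ℝ}
    (hd : ∀ k, d k ^ 2 = 1) :
    rescaleVars (Sym2.mulPair d) (genericLpm n c) = genericLpm n c := by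
  simp [genericLpm, rescaleVars_genericPrincipalMinor, ← Finset.prod_pow, hd]

/-- Let `P` be an lpm polynomial and `∼` an equivalence relation on `[n]`
(a partition into blocks). If `A` is a symmetric matrix (given as a function
on unordered pairs) that is block diagonal with respect to the partition, then
the gradient `∇P(A)` is block diagonal as well: all its off-block entries
`(∂P/∂X_{ij})(A)` with `i ≁ j` vanish. -/
theorem gradient_lpm_block_diagonal {n : ℕ} (c : Finset (Fin n) → ℝ)
    (r : Fin n → Fin n → Prop) (hr : Equivalence r) (A : Sym2 (Fin n) → ℝ)
    (hA : ∀ i j, ¬ r i j → A (Sym2.mk i j) = 0) :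
    ∀ i j, ¬ r i j → eval A (pderiv (Sym2.mk i j) (genericLpm n c)) = 0 := by
  classical
  intro i j hij
  let d : Fin n → ℝ := fun k => if r k i then 1 else -1
  have hd_sq (k : Fin n) : d k ^ 2 = 1 := by
    by_cases h : r k i <;> simp [d, h]
  have hd_block {k l : Fin n} (hkl : r k l) : d k = d l := by
    simp only [d, (show r k i ↔ r l i from ⟨hr.trans (hr.symm hkl), hr.trans hkl⟩)]
  refine eval_pderiv_eq_zero_of_rescaleVars_eq_self (rescaleVars_genericLpm c hd_sq) ?_ ?_
  · funext u
    induction u using Sym2.ind with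
    | _ k l =>
      by_cases hkl : r k l
      · simp [hd_block hkl, ← sq, hd_sq]
      · simp [hA k l hkl]
  · have hji : ¬ r j i := fun h => hij (hr.symm h)
    simp [d, hr.refl i, hji]
end

section
/- Let A be a real symmetric n×n matrix written in block form A = [[a, vᵀ],[v, M]] with a ∈ R, v ∈ R^{n-1}, M symmetric of size (n-1), and a ≠ 0. Let A/0 := M - a⁻¹ v vᵀ be the Schur complement. Then for every subset S ⊆ {0,1,...,n-1} containing 0, det(A_S) = a · det((A/0)_{S∖{0}}); consequently, for any lpm polynomial P(X) = Σ a_S det(X_S) in which every S with a_S ≠ 0 contains the index 0 with the factor X_{00} (i.e. P is the minor lift of x_0·q), one has P(A) = a · Q(A/0), where Q is the minor lift of q. -/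
/-- The principal minor of a square matrix indexed by the subset `S`. -/
noncomputable def principalMinor {ι : Type*} [DecidableEq ι]
    (A : Matrix ι ι ℝ) (S : Finset ι) : ℝ :=
  (A.submatrix (fun i : S => (i : ι)) (fun i : S => (i : ι))).det

/-- The symmetric matrix `A = [[a, vᵀ],[v, M]]`, indexed by `Fin 1 ⊕ Fin m`. -/
noncomputable def blockMat {m : ℕ} (a : ℝ) (v : Fin m → ℝ)
    (M : Matrix (Fin m) (Fin m) ℝ) :
    Matrix (Fin 1 ⊕ Fin m) (Fin 1 ⊕ Fin m) ℝ :=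
  Matrix.fromBlocks (Matrix.of fun _ _ => a) (Matrix.of fun _ j => v j)
    (Matrix.of fun i _ => v i) M

/-- The Schur complement `A/0 = M - a⁻¹ v vᵀ`. -/
noncomputable def schurCompl {m : ℕ} (a : ℝ) (v : Fin m → ℝ)
    (M : Matrix (Fin m) (Fin m) ℝ) : Matrix (Fin m) (Fin m) ℝ :=
  Matrix.of fun i j => M i j - a⁻¹ * v i * v j

lemma key {m : ℕ} (a : ℝ) (ha : a ≠ 0) (v : Fin m → ℝ)
    (M : Matrix (Fin m) (Fin m) ℝ) (T : Finset (Fin m)) :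
    principalMinor (blockMat a v M) (insert (Sum.inl 0) (T.image Sum.inr))
      = a * principalMinor (schurCompl a v M) T := by
  classical
  set S : Finset (Fin 1 ⊕ Fin m) := insert (Sum.inl 0) (T.image Sum.inr) with hS
  let e : (Fin 1 ⊕ {x // x ∈ T}) ≃ {x // x ∈ S} :=
    { toFun := fun s => match s with
        | Sum.inl _ => ⟨Sum.inl 0, by simp [hS]⟩
        | Sum.inr j => ⟨Sum.inr j.1, by simp [hS, j.2]⟩
      invFun := fun x => match x with
        | ⟨Sum.inl _, _⟩ => Sum.inl 0
        | ⟨Sum.inr j, hx⟩ => Sum.inr ⟨j, by simpa [hS] using hx⟩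
      left_inv := by
        rintro (i | ⟨j, hj⟩)
        · exact congrArg Sum.inl (Subsingleton.elim _ _)
        · rfl
      right_inv := by
        rintro ⟨(i | j), hx⟩
        · exact Subtype.ext (congrArg Sum.inl (Subsingleton.elim _ _))
        · rfl }
  letI : Invertible (Matrix.of fun _ _ => a : Matrix (Fin 1) (Fin 1) ℝ) :=
    ⟨Matrix.of fun _ _ => a⁻¹,
      by ext i j; fin_cases i; fin_cases j; simp [Matrix.mul_apply, inv_mul_cancel₀ ha],
      by ext i j; fin_cases i; fin_cases j; simp [Matrix.mul_apply, mul_inv_cancel₀ ha]⟩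
  have hinv : (⅟(Matrix.of fun _ _ => a : Matrix (Fin 1) (Fin 1) ℝ))
      = Matrix.of fun _ _ => a⁻¹ := rfl
  have hsub : ((blockMat a v M).submatrix (fun i : S => (i : Fin 1 ⊕ Fin m))
        (fun i : S => (i : Fin 1 ⊕ Fin m))).submatrix e e
      = Matrix.fromBlocks (Matrix.of fun _ _ => a)
          (Matrix.of fun _ (j : {x // x ∈ T}) => v j.1)
          (Matrix.of fun (i : {x // x ∈ T}) _ => v i.1)
          (M.submatrix (fun i : {x // x ∈ T} => i.1) (fun i : {x // x ∈ T} => i.1)) := by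
    ext (i | i) (j | j) <;> rfl
  have hD : (M.submatrix (fun i : {x // x ∈ T} => i.1) (fun i : {x // x ∈ T} => i.1))
        - (Matrix.of fun (i : {x // x ∈ T}) (_ : Fin 1) => v i.1)
          * (⅟(Matrix.of fun _ _ => a : Matrix (Fin 1) (Fin 1) ℝ))
          * (Matrix.of fun (_ : Fin 1) (j : {x // x ∈ T}) => v j.1)
      = (schurCompl a v M).submatrix (fun i : {x // x ∈ T} => i.1)
          (fun i : {x // x ∈ T} => i.1) := by
    ext i j
    simp only [Matrix.sub_apply, Matrix.mul_apply, Matrix.submatrix_apply, Matrix.of_apply,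
      hinv, schurCompl, Fin.sum_univ_one]
    ring
  have hdet := Matrix.det_submatrix_equiv_self e
      ((blockMat a v M).submatrix (fun i : S => (i : Fin 1 ⊕ Fin m))
        (fun i : S => (i : Fin 1 ⊕ Fin m)))
  unfold principalMinor
  rw [← hdet, hsub, Matrix.det_fromBlocks₁₁, hD]
  congr 1
  simp [Matrix.det_fin_one]

/-- Let `A = [[a, vᵀ],[v, M]]` be symmetric with `a ≠ 0` and `A/0` its Schur
complement. Then (i) for every subset `S` of the indices containing the index
`0`, `det(A_S) = a · det((A/0)_{S∖{0}})`; and consequently (ii) for any lpm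
polynomial `P` which is the minor lift of `x_0·q` (so each index set carries
the index `0`), `P(A) = a · Q(A/0)` where `Q` is the minor lift of `q`. -/
theorem schur_complement_principal_minors {m : ℕ} (a : ℝ) (ha : a ≠ 0)
    (v : Fin m → ℝ) (M : Matrix (Fin m) (Fin m) ℝ) (hM : M.IsSymm) :
    (∀ S : Finset (Fin 1 ⊕ Fin m), Sum.inl 0 ∈ S →
        principalMinor (blockMat a v M) S
          = a * principalMinor (schurCompl a v M)
              ((S.erase (Sum.inl 0)).preimage Sum.inr Sum.inr_injective.injOn)) ∧
      ∀ q : Finset (Fin m) → ℝ,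
        ∑ T : Finset (Fin m),
            q T * principalMinor (blockMat a v M)
              (insert (Sum.inl 0) (T.image Sum.inr))
          = a * ∑ T : Finset (Fin m), q T * principalMinor (schurCompl a v M) T := by
  classical
  constructor
  · intro S hS0
    have h := key a ha v M ((S.erase (Sum.inl 0)).preimage Sum.inr Sum.inr_injective.injOn)
    have hrep : insert (Sum.inl 0)
        (((S.erase (Sum.inl 0)).preimage Sum.inr Sum.inr_injective.injOn).image Sum.inr)
        = S := by
      ext x
      rcases x with i | j
      · simp [Subsingleton.elim i 0, hS0]
      · simp [Finset.mem_preimage]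
    rw [hrep] at h
    exact h
  · intro q
    rw [Finset.mul_sum]
    refine Finset.sum_congr rfl fun T _ => ?_
    rw [key a ha v M T]
    ring
end
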